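/- arXiv:1804.02982 — 10 statements merged into one kernel-verified Lean document; each statement's English description precedes it below -/
import Mathlib

section
/- Let Y be a real vector space, A ⊆ Y and k ∈ Y \ {0}. If k ∈ −0⁺A (i.e. −k belongs to the recession cone of A), then cl_k(A) = {y ∈ Y : y − t·k ∈ A for all t > 0}. -/
/-- The `k`-directional closure of a set `A`. -/
def dirCl {Y : Type*} [AddCommGroup Y] [Module ℝ Y] (A : Set Y) (k : Y) : Set Y :=
  {y | ∀ l : ℝ, 0 < l → ∃ t : ℝ, 0 ≤ t ∧ t < l ∧ y - t • k ∈ A}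

/-- The recession cone `0⁺A` of a set `A`. -/
def recCone {Y : Type*} [AddCommGroup Y] [Module ℝ Y] (A : Set Y) : Set Y :=
  {u | ∀ a ∈ A, ∀ t : ℝ, 0 ≤ t → a + t • u ∈ A}

theorem dirCl_of_neg_mem_recCone {Y : Type*} [AddCommGroup Y] [Module ℝ Y]
    (A : Set Y) (k : Y) (hk : k ≠ 0) (hrec : -k ∈ recCone A) :
    dirCl A k = {y : Y | ∀ t : ℝ, 0 < t → y - t • k ∈ A} := by
  ext y
  constructor
  · intro hy t ht
    obtain ⟨s, hs0, hst, hsA⟩ := hy t ht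
    have := hrec _ hsA (t - s) (by linarith)
    have heq : y - s • k + (t - s) • (-k) = y - t • k := by
      rw [smul_neg, sub_smul]; abel
    rwa [heq] at this
  · intro hy l hl
    exact ⟨l / 2, by linarith, by linarith, hy _ (by linarith)⟩
end

section
/- Let Y be a real vector space and A ⊆ Y. If A is algebraically closed, then its recession cone 0⁺A is algebraically closed. -/
/-- `y` is linearly accessible from `A`. -/
def LinAccessible {Y : Type*} [AddCommGroup Y] [Module ℝ Y] (A : Set Y) (y : Y) : Prop :=
  ∃ a ∈ A, ∀ l : ℝ, 0 < l → l < 1 → a + l • (y - a) ∈ A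

/-- `A` is algebraically closed. -/
def AlgClosed {Y : Type*} [AddCommGroup Y] [Module ℝ Y] (A : Set Y) : Prop :=
  ∀ y : Y, LinAccessible A y → y ∈ A

theorem algClosed_recCone_of_algClosed {Y : Type*} [AddCommGroup Y] [Module ℝ Y]
    (A : Set Y) (hA : AlgClosed A) : AlgClosed (recCone A) := by
  rintro u ⟨v, hv, hseg⟩ a ha t ht
  apply hA
  refine ⟨a + t • v, hv a ha t ht, ?_⟩
  intro l hl0 hl1
  have h := hseg l hl0 hl1 a ha t ht
  have : a + t • v + l • (a + t • u - (a + t • v)) = a + t • (v + l • (u - v)) := by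
    simp only [smul_add, smul_sub, smul_comm l t]
    module
  rw [this]
  exact h
end

section
/- Let Y be a real vector space, A ⊆ Y and k ∈ Y \ {0}. If A is k-directionally closed, then the recession cone 0⁺A is k-directionally closed. -/
theorem dirClosed_recCone_of_dirClosed {Y : Type*} [AddCommGroup Y] [Module ℝ Y]
    (A : Set Y) (k : Y) (hk : k ≠ 0) (hA : A = dirCl A k) :
    recCone A = dirCl (recCone A) k := by
  ext u
  constructor
  · intro hu l hl
    exact ⟨0, le_refl 0, hl, by simpa using hu⟩
  · intro hu a ha t ht
    rw [hA]
    intro l hl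
    rcases eq_or_lt_of_le ht with h | h
    · refine ⟨0, le_refl 0, hl, ?_⟩
      simp [← h]
      exact hA ▸ ha
    · obtain ⟨s, hs0, hsl, hsm⟩ := hu (l / t) (div_pos hl h)
      refine ⟨t * s, mul_nonneg h.le hs0, ?_, ?_⟩
      · calc t * s < t * (l / t) := by
              exact mul_lt_mul_of_pos_left hsl h
          _ = l := by field_simp
      · have := hsm a ha t h.le
        have heq : a + t • (u - s • k) = a + t • u - (t * s) • k := by
          rw [smul_sub, mul_smul]; abel
        rw [heq] at this
        exact this
end

section
/- Let Y be a real topological vector space, A ⊆ Y and k ∈ Y \ {0}. Then cl_k(A) is a topologically closed set if and only if cl_k(A) = cl(A). -/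
lemma subset_dirCl {Y : Type*} [AddCommGroup Y] [Module ℝ Y] (A : Set Y) (k : Y) :
    A ⊆ dirCl A k :=
  fun _ hy _ hl => ⟨0, le_rfl, hl, by simpa using hy⟩

lemma dirCl_subset_closure {Y : Type*} [AddCommGroup Y] [Module ℝ Y] [TopologicalSpace Y]
    [ContinuousSub Y] [ContinuousSMul ℝ Y] (A : Set Y) (k : Y) :
    dirCl A k ⊆ closure A := by
  intro y hy
  have hzero : (0 : ℝ) ∈ closure ((fun t : ℝ => y - t • k) ⁻¹' A) := by
    refine Real.mem_closure_iff.2 fun ε hε => ?_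
    obtain ⟨t, ht0, htε, htA⟩ := hy ε hε
    exact ⟨t, htA, by rwa [sub_zero, abs_of_nonneg ht0]⟩
  simpa using map_mem_closure (by fun_prop) hzero (Set.mapsTo_preimage _ A)

theorem isClosed_dirCl_iff_general {Y : Type*} [AddCommGroup Y] [Module ℝ Y] [TopologicalSpace Y]
    [IsTopologicalAddGroup Y] [ContinuousSMul ℝ Y] (A : Set Y) (k : Y) :
    IsClosed (dirCl A k) ↔ dirCl A k = closure A := by
  refine ⟨fun hclosed => ?_, fun h => h ▸ isClosed_closure⟩
  exact (dirCl_subset_closure A k).antisymm (hclosed.closure_subset_iff.2 (subset_dirCl A k))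

theorem isClosed_dirCl_iff {Y : Type*} [AddCommGroup Y] [Module ℝ Y] [TopologicalSpace Y]
    [IsTopologicalAddGroup Y] [ContinuousSMul ℝ Y] (A : Set Y) (k : Y) (hk : k ≠ 0) :
    IsClosed (dirCl A k) ↔ dirCl A k = closure A :=
  isClosed_dirCl_iff_general A k
end

section
/- Let Y be a real vector space, A ⊆ Y and k ∈ Y \ {0}. Define Ã := cl_k(A − {t·k : t ≥ 0}). Then sublev_{φ_{A,k}}(t) = Ã + t·k for all t ∈ ℝ, and Ã = {y ∈ Y : y − t·k ∈ A − {s·k : s ≥ 0} for all t > 0}. -/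
open Pointwise

/-- The Gerstewitz functional `φ_{A,k}`. -/
noncomputable def gerst {Y : Type*} [AddCommGroup Y] [Module ℝ Y]
    (A : Set Y) (k : Y) (y : Y) : EReal :=
  sInf (Real.toEReal '' {t : ℝ | y - t • k ∈ A})

theorem sublevel_gerst_eq {Y : Type*} [AddCommGroup Y] [Module ℝ Y]
    (A : Set Y) (k : Y) (hk : k ≠ 0) :
    (∀ t : ℝ, {y : Y | gerst A k y ≤ (t : EReal)} =
        (fun a => a + t • k) '' dirCl (A - {x : Y | ∃ s : ℝ, 0 ≤ s ∧ x = s • k}) k) ∧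
    dirCl (A - {x : Y | ∃ s : ℝ, 0 ≤ s ∧ x = s • k}) k =
      {y : Y | ∀ t : ℝ, 0 < t →
        y - t • k ∈ A - {x : Y | ∃ s : ℝ, 0 ≤ s ∧ x = s • k}} := by
  set S : Set Y := {x : Y | ∃ s : ℝ, 0 ≤ s ∧ x = s • k} with hS
  have hB : ∀ y : Y, y ∈ A - S ↔ ∃ s : ℝ, 0 ≤ s ∧ y + s • k ∈ A := by
    intro y
    constructor
    · rintro ⟨a, ha, x, ⟨s, hs, rfl⟩, rfl⟩
      exact ⟨s, hs, by simpa using ha⟩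
    · rintro ⟨s, hs, ha⟩
      exact ⟨y + s • k, ha, s • k, ⟨s, hs, rfl⟩, by simp⟩
  have hdown : ∀ y ∈ A - S, ∀ t : ℝ, 0 ≤ t → y - t • k ∈ A - S := by
    intro y hy t ht
    rw [hB] at hy ⊢
    obtain ⟨s, hs, ha⟩ := hy
    refine ⟨s + t, by linarith, ?_⟩
    have he : y - t • k + (s + t) • k = y + s • k := by
      rw [add_smul]; abel
    rw [he]; exact ha
  have hpart2 : dirCl (A - S) k = {y : Y | ∀ t : ℝ, 0 < t → y - t • k ∈ A - S} := by
    ext y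
    constructor
    · intro hy t ht
      obtain ⟨t', ht0, ht1, hmem⟩ := hy t ht
      have h2 := hdown _ hmem (t - t') (by linarith)
      have he : y - t' • k - (t - t') • k = y - t • k := by
        rw [sub_smul]; abel
      rwa [he] at h2
    · intro hy l hl
      exact ⟨l / 2, by linarith, by linarith, hy (l / 2) (by linarith)⟩
  refine ⟨?_, hpart2⟩
  intro t
  ext y
  simp only [Set.mem_setOf_eq, Set.mem_image]
  constructor
  · intro hy
    refine ⟨y - t • k, ?_, by abel⟩
    rw [hpart2]
    intro ε hε
    have hlt : gerst A k y < ((t + ε : ℝ) : EReal) := by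
      refine lt_of_le_of_lt hy ?_
      exact_mod_cast (by linarith : t < t + ε)
    rw [gerst, sInf_lt_iff] at hlt
    obtain ⟨x, ⟨s, hs, rfl⟩, hxlt⟩ := hlt
    have hslt : s < t + ε := by exact_mod_cast hxlt
    have hmem : y - s • k ∈ A - S := (hB _).mpr ⟨0, le_refl 0, by simpa using hs⟩
    have h2 := hdown _ hmem (t + ε - s) (by linarith)
    have he : y - s • k - (t + ε - s) • k = y - t • k - ε • k := by
      rw [sub_smul, add_smul]; abel
    rwa [he] at h2
  · rintro ⟨a, ha, rfl⟩
    rw [hpart2] at ha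
    by_contra hgt
    push_neg at hgt
    obtain ⟨d, hd1, hd2⟩ := EReal.exists_between_coe_real hgt
    have htd : t < d := by exact_mod_cast hd1
    have hε : (0 : ℝ) < d - t := by linarith
    have hmem := (hB _).mp (ha (d - t) hε)
    obtain ⟨s, hs, hA⟩ := hmem
    have he : a - (d - t) • k + s • k = (a + t • k) - (d - s) • k := by
      rw [sub_smul, sub_smul]; abel
    rw [he] at hA
    have : gerst A k (a + t • k) ≤ ((d - s : ℝ) : EReal) :=
      sInf_le ⟨d - s, hA, rfl⟩
    have hle : ((d - s : ℝ) : EReal) ≤ ((d : ℝ) : EReal) := by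
      exact_mod_cast (by linarith : d - s ≤ d)
    exact absurd (lt_of_lt_of_le hd2 (le_trans this hle)) (lt_irrefl _)
end

section
/- Let Y be a real vector space, A ⊆ Y and k ∈ Y \ {0}. Define Ã := sublev_{φ_{A,k}}(0). Then Ã is k-directionally closed, k ∈ −0⁺Ã \ {0}, and φ_{A,k}(y) = φ_{Ã,k}(y) for all y ∈ Y. -/
/-!
The Gerstewitz functional is translation equivariant along `k`: `φ(y - t • k) = φ(y) - t`.
Hence `y - t • k` lies in the zero sublevel set `Ã` exactly when `φ(y) ≤ t`. Taking the infimum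
over such `t` gives `φ_{Ã,k}(y) = φ(y)`; letting `t` decrease to `0` shows that `Ã` is
`k`-directionally closed; and `φ(a - t • k) = φ(a) - t ≤ 0` for `a ∈ Ã`, `t ≥ 0` gives `-k ∈ 0⁺Ã`.
-/

namespace EReal

noncomputable def subCoeOrderIso (s : ℝ) : EReal ≃o EReal where
  toFun x := x - s
  invFun x := x + s
  left_inv _ := EReal.sub_add_cancel
  right_inv _ := EReal.add_sub_cancel_right
  map_rel_iff' := by
    simp only [Equiv.coe_fn_mk, sub_eq_add_neg, ← EReal.coe_neg]
    exact (EReal.addLECancellable_coe (-s)).add_le_add_iff_right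

theorem sInf_image_coe_setOf_le (x : EReal) : sInf (Real.toEReal '' {t : ℝ | x ≤ t}) = x := by
  refine le_antisymm ?_ (le_sInf ?_)
  · rw [← EReal.le_of_forall_lt_iff_le]
    exact fun z hz => sInf_le ⟨z, hz.le, rfl⟩
  · rintro _ ⟨t, ht, rfl⟩
    exact ht

end EReal

section Gerstewitz

variable {Y : Type*} [AddCommGroup Y] [Module ℝ Y] (A : Set Y) (k : Y)

theorem subset_dirCl_s10 : A ⊆ dirCl A k :=
  fun y hy _ hl => ⟨0, le_rfl, hl, by rwa [zero_smul, sub_zero]⟩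

theorem gerst_sub_smul (y : Y) (s : ℝ) : gerst A k (y - s • k) = gerst A k y - s := by
  have hS : {t : ℝ | y - s • k - t • k ∈ A} = (· - s) '' {t | y - t • k ∈ A} := by
    ext t
    simp only [Set.mem_ofPred_eq, Set.mem_image]
    refine ⟨fun h => ⟨t + s, ?_, add_sub_cancel_right t s⟩, ?_⟩
    · rwa [add_smul, sub_add_eq_sub_sub_swap]
    · rintro ⟨u, hu, rfl⟩
      rwa [sub_smul, sub_sub_eq_add_sub, sub_add_cancel]
  have hcoe : Real.toEReal ∘ (· - s) = EReal.subCoeOrderIso s ∘ Real.toEReal := by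
    funext t
    exact EReal.coe_sub t s
  unfold gerst
  rw [hS, ← Set.image_comp, hcoe, Set.image_comp, sInf_image, ← OrderIso.map_sInf]
  rfl

theorem gerst_sub_smul_nonpos_iff (y : Y) (t : ℝ) :
    gerst A k (y - t • k) ≤ 0 ↔ gerst A k y ≤ t := by
  rw [gerst_sub_smul, EReal.sub_le_iff_le_add (by simp) (by simp), zero_add]

theorem dirCl_gerst_sublevel :
    dirCl {y : Y | gerst A k y ≤ 0} k = {y : Y | gerst A k y ≤ 0} := by
  refine subset_antisymm (fun y hy => ?_) (subset_dirCl_s10 _ k)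
  rw [Set.mem_ofPred_eq, ← EReal.le_of_forall_lt_iff_le]
  intro z hz
  obtain ⟨t, -, htz, hmem⟩ := hy z (mod_cast hz)
  exact ((gerst_sub_smul_nonpos_iff A k y t).1 hmem).trans (mod_cast htz.le)

theorem neg_mem_recCone_gerst_sublevel : -k ∈ recCone {y : Y | gerst A k y ≤ 0} := by
  intro a ha t ht
  rw [smul_neg, ← sub_eq_add_neg, Set.mem_ofPred_eq, gerst_sub_smul_nonpos_iff]
  exact ha.trans (mod_cast ht)

theorem gerst_gerst_sublevel (y : Y) : gerst {y' : Y | gerst A k y' ≤ 0} k y = gerst A k y := by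
  have hS : {t : ℝ | y - t • k ∈ {y' : Y | gerst A k y' ≤ 0}} = {t : ℝ | gerst A k y ≤ t} :=
    Set.ext fun t => gerst_sub_smul_nonpos_iff A k y t
  rw [gerst, hS, EReal.sInf_image_coe_setOf_le]

end Gerstewitz

theorem zero_sublevel_gerst_general {Y : Type*} [AddCommGroup Y] [Module ℝ Y]
    (A : Set Y) (k : Y) :
    {y : Y | gerst A k y ≤ (0 : EReal)} = dirCl {y : Y | gerst A k y ≤ (0 : EReal)} k ∧
    -k ∈ recCone {y : Y | gerst A k y ≤ (0 : EReal)} ∧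
    (∀ y : Y, gerst A k y = gerst {y' : Y | gerst A k y' ≤ (0 : EReal)} k y) :=
  ⟨(dirCl_gerst_sublevel A k).symm, neg_mem_recCone_gerst_sublevel A k,
    fun y => (gerst_gerst_sublevel A k y).symm⟩

theorem zero_sublevel_gerst {Y : Type*} [AddCommGroup Y] [Module ℝ Y]
    (A : Set Y) (k : Y) (hk : k ≠ 0) :
    {y : Y | gerst A k y ≤ (0 : EReal)} = dirCl {y : Y | gerst A k y ≤ (0 : EReal)} k ∧
    -k ∈ recCone {y : Y | gerst A k y ≤ (0 : EReal)} ∧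
    (∀ y : Y, gerst A k y = gerst {y' : Y | gerst A k y' ≤ (0 : EReal)} k y) :=
  zero_sublevel_gerst_general A k
end

section
/- Let Y be a real topological vector space, A ⊆ Y and k ∈ Y \ {0}. Then the Gerstewitz functional φ_{A,k} is lower semicontinuous if and only if the set cl_k(A − {t·k : t ≥ 0}) is topologically closed. -/
open Pointwise

/-! The sublevel set `{φ_{A,k} ≤ r}` is the translate `r • k + cl_k(A - ℝ₊ k)`, so lower
semicontinuity, i.e. closedness of all sublevel sets, reduces to closedness of the single set
`cl_k(A - ℝ₊ k)`. The levels `±∞` add nothing: `{φ ≤ ⊤}` is everything and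
`{φ ≤ ⊥}` is the intersection of the real sublevel sets. -/

theorem EReal.le_coe_iff_forall_lt {x : EReal} {r : ℝ} :
    x ≤ r ↔ ∀ z : ℝ, r < z → x < z :=
  ⟨fun h _ hz => h.trans_lt (EReal.coe_lt_coe_iff.2 hz),
    fun h => EReal.le_of_forall_lt_iff_le.1 fun z hz => (h z (EReal.coe_lt_coe_iff.1 hz)).le⟩

theorem EReal.lowerSemicontinuous_iff_isClosed_preimage_Iic_coe {α : Type*}
    [TopologicalSpace α] {f : α → EReal} :
    LowerSemicontinuous f ↔ ∀ r : ℝ, IsClosed (f ⁻¹' Set.Iic (r : EReal)) := by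
  refine ⟨fun h r => h.isClosed_preimage r,
    fun h => lowerSemicontinuous_iff_isClosed_preimage.2 fun z => ?_⟩
  induction z using EReal.rec with
  | bot =>
    have hbot : f ⁻¹' Set.Iic ⊥ = ⋂ r : ℝ, f ⁻¹' Set.Iic (r : EReal) := by
      ext y
      simpa using (EReal.le_of_forall_lt_iff_le (x := ⊥) (y := f y)).symm
    rw [hbot]
    exact isClosed_iInter h
  | coe r => exact h r
  | top => simp

section Gerstewitz

variable {Y : Type*} [AddCommGroup Y] [Module ℝ Y]

theorem gerst_lt_coe_iff {A : Set Y} {k y : Y} {z : ℝ} :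
    gerst A k y < z ↔ ∃ t < z, y - t • k ∈ A := by
  simp only [gerst, sInf_lt_iff, Set.exists_mem_image, EReal.coe_lt_coe_iff, Set.mem_ofPred_eq]
  exact ⟨fun ⟨t, ht, htz⟩ => ⟨t, htz, ht⟩, fun ⟨t, htz, ht⟩ => ⟨t, ht, htz⟩⟩

theorem mem_sub_ray_iff {A : Set Y} {k x : Y} :
    x ∈ A - {x : Y | ∃ t : ℝ, 0 ≤ t ∧ x = t • k} ↔ ∃ u : ℝ, 0 ≤ u ∧ x + u • k ∈ A := by
  constructor
  · rintro ⟨a, ha, _, ⟨u, hu, rfl⟩, rfl⟩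
    exact ⟨u, hu, by rwa [sub_add_cancel]⟩
  · rintro ⟨u, hu, hx⟩
    exact ⟨x + u • k, hx, u • k, ⟨u, hu, rfl⟩, add_sub_cancel_right x _⟩

theorem sub_smul_mem_dirCl_sub_ray_iff {A : Set Y} {k y : Y} {r : ℝ} :
    y - r • k ∈ dirCl (A - {x : Y | ∃ t : ℝ, 0 ≤ t ∧ x = t • k}) k ↔
      ∀ z : ℝ, r < z → ∃ t < z, y - t • k ∈ A := by
  simp only [dirCl, Set.mem_ofPred_eq, mem_sub_ray_iff]
  constructor
  · intro h z hz
    obtain ⟨s, -, hs, u, hu, hmem⟩ := h (z - r) (sub_pos.2 hz)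
    refine ⟨r + s - u, by linarith, ?_⟩
    convert hmem using 1
    module
  · intro h l hl
    obtain ⟨t, ht, hmem⟩ := h (r + l) (lt_add_of_pos_right r hl)
    -- shift by `s ≥ 0` to reach `t` when `t > r`, otherwise push back along the ray by `r - t`
    refine ⟨max (t - r) 0, le_max_right _ _, max_lt (by linarith) hl,
      r + max (t - r) 0 - t, by linarith [le_max_left (t - r) 0], ?_⟩
    convert hmem using 1
    module

theorem gerst_preimage_Iic_coe (A : Set Y) (k : Y) (r : ℝ) :
    gerst A k ⁻¹' Set.Iic (r : EReal) =
      (· - r • k) ⁻¹' dirCl (A - {x : Y | ∃ t : ℝ, 0 ≤ t ∧ x = t • k}) k := by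
  ext y
  simp only [Set.mem_preimage, Set.mem_Iic, EReal.le_coe_iff_forall_lt, gerst_lt_coe_iff,
    sub_smul_mem_dirCl_sub_ray_iff]

end Gerstewitz

theorem gerst_lsc_iff_general {Y : Type*} [AddCommGroup Y] [Module ℝ Y] [TopologicalSpace Y]
    [IsTopologicalAddGroup Y] (A : Set Y) (k : Y) :
    LowerSemicontinuous (gerst A k) ↔
      IsClosed (dirCl (A - {x : Y | ∃ t : ℝ, 0 ≤ t ∧ x = t • k}) k) := by
  simp only [EReal.lowerSemicontinuous_iff_isClosed_preimage_Iic_coe, gerst_preimage_Iic_coe]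
  refine ⟨fun h => by simpa using h 0, fun h r => h.preimage (continuous_sub_right _)⟩

theorem gerst_lsc_iff {Y : Type*} [AddCommGroup Y] [Module ℝ Y] [TopologicalSpace Y]
    [IsTopologicalAddGroup Y] [ContinuousSMul ℝ Y] (A : Set Y) (k : Y) (hk : k ≠ 0) :
    LowerSemicontinuous (gerst A k) ↔
      IsClosed (dirCl (A - {x : Y | ∃ t : ℝ, 0 ≤ t ∧ x = t • k}) k) :=
  gerst_lsc_iff_general A k
end

section
/- Let ℓ, r ∈ ℕ with r ≥ 1, let w¹, …, wʳ ∈ ℝ^ℓ be nonzero vectors, b ∈ ℝ^r, and A := {y ∈ ℝ^ℓ : ⟨wⁱ, y⟩ ≤ bᵢ for all i ∈ {1, …, r}}. Let k ∈ ℝ^ℓ satisfy ⟨wⁱ, k⟩ > 0 for all i. Then the Gerstewitz functional φ_{A,k} is finite-valued and φ_{A,k}(y) = max over i ∈ {1, …, r} of (⟨wⁱ, y⟩ − bᵢ)/⟨wⁱ, k⟩ for all y ∈ ℝ^ℓ. -/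
lemma sInf_toEReal_Ici (M : ℝ) : sInf (Real.toEReal '' Set.Ici M) = (M : EReal) := by
  apply le_antisymm
  · exact sInf_le ⟨M, le_refl M, rfl⟩
  · apply le_sInf
    rintro x ⟨t, ht, rfl⟩
    exact_mod_cast ht

theorem gerst_polyhedral_formula (ℓ r : ℕ) (hr : 1 ≤ r)
    (w : Fin r → (Fin ℓ → ℝ)) (hw : ∀ i, w i ≠ 0) (b : Fin r → ℝ)
    (k : Fin ℓ → ℝ) (hk : ∀ i, 0 < ∑ j, w i j * k j) :
    ∀ y : Fin ℓ → ℝ,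
      gerst {z : Fin ℓ → ℝ | ∀ i, ∑ j, w i j * z j ≤ b i} k y =
        ((Finset.univ.sup'
            (Finset.univ_nonempty_iff.mpr (Fin.pos_iff_nonempty.mp hr))
            fun i => (∑ j, w i j * y j - b i) / (∑ j, w i j * k j) : ℝ) : EReal) := by
  intro y
  have hne := Finset.univ_nonempty_iff.mpr (Fin.pos_iff_nonempty.mp hr)
  set M := Finset.univ.sup' hne fun i => (∑ j, w i j * y j - b i) / (∑ j, w i j * k j)
  have hset : {t : ℝ | y - t • k ∈ {z : Fin ℓ → ℝ | ∀ i, ∑ j, w i j * z j ≤ b i}}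
      = Set.Ici M := by
    ext t
    simp only [Set.mem_setOf_eq, Set.mem_Ici]
    constructor
    · intro h
      apply Finset.sup'_le
      intro i _
      rw [div_le_iff₀ (hk i)]
      have := h i
      simp only [Pi.sub_apply, Pi.smul_apply, smul_eq_mul, mul_sub,
        Finset.sum_sub_distrib] at this
      have hsum : ∑ j, w i j * (t * k j) = t * ∑ j, w i j * k j := by
        rw [Finset.mul_sum]; congr 1; ext j; ring
      rw [hsum] at this
      linarith
    · intro h i
      have hi : (∑ j, w i j * y j - b i) / (∑ j, w i j * k j) ≤ t :=
        le_trans (Finset.le_sup' (fun i => (∑ j, w i j * y j - b i) / (∑ j, w i j * k j)) (Finset.mem_univ i)) h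
      rw [div_le_iff₀ (hk i)] at hi
      simp only [Pi.sub_apply, Pi.smul_apply, smul_eq_mul, mul_sub,
        Finset.sum_sub_distrib]
      have hsum : ∑ j, w i j * (t * k j) = t * ∑ j, w i j * k j := by
        rw [Finset.mul_sum]; congr 1; ext j; ring
      rw [hsum]
      linarith
  rw [gerst, hset, sInf_toEReal_Ici]
end

section
/- Let Y be a real topological vector space and f : Y → EReal. Then f is continuous if and only if epi f is closed in Y × ℝ and epi f + {t·(0_Y, 1) : t > 0} ⊆ int(epi f). -/
open Pointwise

/-! Closedness of the epigraph is lower semicontinuity. Adding the open vertical ray to the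
epigraph produces exactly the strict epigraph `{f x < t}`, and the strict epigraph lying in the
interior of the epigraph gives, for `f x < c`, a neighbourhood of `x` on which `f < c`, that is,
upper semicontinuity. -/

namespace EReal

variable {X : Type*} {f : X → EReal}

def epigraph (f : X → EReal) : Set (X × ℝ) := {p | f p.1 ≤ (p.2 : EReal)}

def strictEpigraph (f : X → EReal) : Set (X × ℝ) := {p | f p.1 < (p.2 : EReal)}

theorem strictEpigraph_subset_epigraph : strictEpigraph f ⊆ epigraph f :=
  fun p (hp : f p.1 < p.2) => hp.le

variable [TopologicalSpace X]

theorem _root_.Continuous.isClosed_epigraph (hf : Continuous f) : IsClosed (epigraph f) :=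
  isClosed_le (hf.comp continuous_fst) (continuous_coe_real_ereal.comp continuous_snd)

theorem _root_.Continuous.isOpen_strictEpigraph (hf : Continuous f) :
    IsOpen (strictEpigraph f) :=
  isOpen_lt (hf.comp continuous_fst) (continuous_coe_real_ereal.comp continuous_snd)

theorem lowerSemicontinuous_of_isClosed_epigraph (h : IsClosed (epigraph f)) :
    LowerSemicontinuous f := by
  intro x c hc
  obtain ⟨t, hct, htf⟩ := exists_between_coe_real hc
  have hslice : IsOpen {y | (y, t) ∈ (epigraph f)ᶜ} :=
    h.isOpen_compl.preimage (continuous_id.prodMk continuous_const)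
  filter_upwards [hslice.mem_nhds (not_le.2 htf)] with y hy
  exact hct.trans (not_le.1 hy)

theorem upperSemicontinuous_of_strictEpigraph_subset_interior
    (h : strictEpigraph f ⊆ interior (epigraph f)) : UpperSemicontinuous f := by
  intro x c hc
  obtain ⟨t, hft, htc⟩ := exists_between_coe_real hc
  have hslice : IsOpen {y | (y, t) ∈ interior (epigraph f)} :=
    isOpen_interior.preimage (continuous_id.prodMk continuous_const)
  filter_upwards [hslice.mem_nhds (h hft)] with y hy
  exact (interior_subset (s := epigraph f) hy).trans_lt htc

theorem epigraph_add_verticalRay {Y : Type*} [AddZeroClass Y] [SMulZeroClass ℝ Y]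
    (f : Y → EReal) :
    epigraph f + {q : Y × ℝ | ∃ t : ℝ, 0 < t ∧ q = t • ((0 : Y), (1 : ℝ))} =
      strictEpigraph f := by
  ext ⟨y, s⟩
  constructor
  · rintro ⟨⟨y', s'⟩, hle, _, ⟨t, ht, rfl⟩, hsum⟩
    simp only [Prod.smul_mk, smul_zero, smul_eq_mul, mul_one, Prod.mk_add_mk, add_zero,
      Prod.mk.injEq] at hsum
    obtain ⟨rfl, rfl⟩ := hsum
    exact (show f y' ≤ s' from hle).trans_lt (EReal.coe_lt_coe_iff.2 (lt_add_of_pos_right s' ht))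
  · intro hlt
    obtain ⟨s', hfs', hs's⟩ := exists_between_coe_real (show f y < s from hlt)
    refine ⟨(y, s'), hfs'.le, (s - s') • ((0 : Y), (1 : ℝ)),
      ⟨s - s', _root_.sub_pos.2 (EReal.coe_lt_coe_iff.1 hs's), rfl⟩, ?_⟩
    simp

end EReal

theorem continuous_iff_epigraph_general {Y : Type*} [AddCommGroup Y] [Module ℝ Y]
    [TopologicalSpace Y] (f : Y → EReal) :
    Continuous f ↔
      IsClosed {p : Y × ℝ | f p.1 ≤ (p.2 : EReal)} ∧
      {p : Y × ℝ | f p.1 ≤ (p.2 : EReal)} +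
          {q : Y × ℝ | ∃ t : ℝ, 0 < t ∧ q = t • ((0 : Y), (1 : ℝ))} ⊆
        interior {p : Y × ℝ | f p.1 ≤ (p.2 : EReal)} := by
  change Continuous f ↔
    IsClosed (EReal.epigraph f) ∧ EReal.epigraph f + _ ⊆ interior (EReal.epigraph f)
  rw [EReal.epigraph_add_verticalRay]
  constructor
  · intro hf
    exact ⟨hf.isClosed_epigraph,
      interior_maximal EReal.strictEpigraph_subset_epigraph hf.isOpen_strictEpigraph⟩
  · rintro ⟨hclosed, hsub⟩
    exact continuous_iff_lower_upperSemicontinuous.2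
      ⟨EReal.lowerSemicontinuous_of_isClosed_epigraph hclosed,
        EReal.upperSemicontinuous_of_strictEpigraph_subset_interior hsub⟩

theorem continuous_iff_epigraph {Y : Type*} [AddCommGroup Y] [Module ℝ Y]
    [TopologicalSpace Y] [IsTopologicalAddGroup Y] [ContinuousSMul ℝ Y] (f : Y → EReal) :
    Continuous f ↔
      IsClosed {p : Y × ℝ | f p.1 ≤ (p.2 : EReal)} ∧
      {p : Y × ℝ | f p.1 ≤ (p.2 : EReal)} +
          {q : Y × ℝ | ∃ t : ℝ, 0 < t ∧ q = t • ((0 : Y), (1 : ℝ))} ⊆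
        interior {p : Y × ℝ | f p.1 ≤ (p.2 : EReal)} :=
  continuous_iff_epigraph_general f
end

section
/- Let Y be a real topological vector space and let f : Y → EReal be continuous and positively homogeneous, i.e. epi f is a nonempty cone (closed under multiplication by nonnegative scalars). Then either f attains only real values on Y, or f(y) = −∞ for all y ∈ Y. -/
/-!
Positive homogeneity makes `f (t • y) = t * f y` for `t > 0`, so by continuity `f 0` is the limit of
`t * f y` as `t → 0⁺`: it is `⊤`, `⊥` or `0` according as `f y` is `⊤`, `⊥` or real. The cone
contains `0 • p = (0, 0)`, so `f 0 ≤ 0`; hence no value is `⊤`, and either `f 0 = ⊥` and every value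
is `⊥`, or `f 0 = 0` and every value is real.
-/

open Filter Topology

def epigraph {Y : Type*} (f : Y → EReal) : Set (Y × ℝ) :=
  {p | f p.1 ≤ p.2}

section PositivelyHomogeneous

variable {Y : Type*} {f : Y → EReal}

theorem smul_le_coe_mul_of_epigraph_cone [MulAction ℝ Y]
    (hcone : ∀ p ∈ epigraph f, ∀ l : ℝ, 0 ≤ l → l • p ∈ epigraph f) {t : ℝ} (ht : 0 < t) (y : Y) :
    f (t • y) ≤ t * f y := by
  have key : ∀ c : ℝ, f y ≤ c → f (t • y) ≤ (t * c : ℝ) := fun c hc => hcone (y, c) hc t ht.le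
  induction h : f y using EReal.rec with
  | bot =>
    rw [EReal.coe_mul_bot_of_pos ht, le_bot_iff, EReal.eq_bot_iff_forall_lt]
    intro r
    calc f (t • y) ≤ (t * ((r - 1) / t) : ℝ) := key _ (h ▸ bot_le)
      _ < r := by rw [mul_div_cancel₀ _ ht.ne']; exact_mod_cast sub_one_lt r
  | coe a => exact_mod_cast key a h.le
  | top => rw [EReal.coe_mul_top_of_pos ht]; exact le_top

theorem smul_eq_coe_mul_of_epigraph_cone [MulAction ℝ Y]
    (hcone : ∀ p ∈ epigraph f, ∀ l : ℝ, 0 ≤ l → l • p ∈ epigraph f) {t : ℝ} (ht : 0 < t) (y : Y) :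
    f (t • y) = t * f y := by
  refine (smul_le_coe_mul_of_epigraph_cone hcone ht y).antisymm ?_
  calc (t : EReal) * f y = t * f (t⁻¹ • t • y) := by rw [inv_smul_smul₀ ht.ne']
    _ ≤ t * (t⁻¹ * f (t • y)) :=
      mul_le_mul_of_nonneg_left (smul_le_coe_mul_of_epigraph_cone hcone (inv_pos.2 ht) _)
        (by exact_mod_cast ht.le)
    _ = f (t • y) := by
      rw [← mul_assoc, ← EReal.coe_mul, mul_inv_cancel₀ ht.ne', EReal.coe_one, one_mul]

variable [AddCommMonoid Y] [Module ℝ Y]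

theorem map_zero_le_zero_of_epigraph_cone (hne : (epigraph f).Nonempty)
    (hcone : ∀ p ∈ epigraph f, ∀ l : ℝ, 0 ≤ l → l • p ∈ epigraph f) : f 0 ≤ 0 := by
  obtain ⟨p, hp⟩ := hne
  simpa [epigraph] using hcone p hp 0 le_rfl

variable [TopologicalSpace Y] [ContinuousSMul ℝ Y] (hf : Continuous f)
  (hcone : ∀ p ∈ epigraph f, ∀ l : ℝ, 0 ≤ l → l • p ∈ epigraph f)
include hf hcone

theorem tendsto_coe_mul_nhdsGT_zero_map_zero (y : Y) :
    Tendsto (fun t : ℝ => (t : EReal) * f y) (𝓝[>] 0) (𝓝 (f 0)) := by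
  have hcont : Continuous fun t : ℝ => f (t • y) := hf.comp (continuous_id.smul continuous_const)
  have hsmul : Tendsto (fun t : ℝ => f (t • y)) (𝓝[>] 0) (𝓝 (f 0)) := by
    simpa using (hcont.tendsto 0).mono_left nhdsWithin_le_nhds
  exact hsmul.congr' <| eventually_nhdsWithin_of_forall fun t ht =>
    smul_eq_coe_mul_of_epigraph_cone hcone ht y

theorem map_zero_eq_top_of_eq_top {y : Y} (hy : f y = ⊤) : f 0 = ⊤ := by
  refine tendsto_nhds_unique (tendsto_coe_mul_nhdsGT_zero_map_zero hf hcone y) ?_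
  refine tendsto_const_nhds.congr' <| eventually_nhdsWithin_of_forall fun t ht => ?_
  rw [hy]; exact (EReal.coe_mul_top_of_pos ht).symm

theorem map_zero_eq_bot_of_eq_bot {y : Y} (hy : f y = ⊥) : f 0 = ⊥ := by
  refine tendsto_nhds_unique (tendsto_coe_mul_nhdsGT_zero_map_zero hf hcone y) ?_
  refine tendsto_const_nhds.congr' <| eventually_nhdsWithin_of_forall fun t ht => ?_
  rw [hy]; exact (EReal.coe_mul_bot_of_pos ht).symm

theorem map_zero_eq_zero_of_eq_coe {y : Y} {a : ℝ} (hy : f y = a) : f 0 = 0 := by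
  refine tendsto_nhds_unique (tendsto_coe_mul_nhdsGT_zero_map_zero hf hcone y) ?_
  have hlim : Tendsto (fun t : ℝ => ((t * a : ℝ) : EReal)) (𝓝[>] 0) (𝓝 ((0 * a : ℝ) : EReal)) :=
    ((continuous_coe_real_ereal.comp (continuous_mul_const a)).tendsto 0).mono_left
      nhdsWithin_le_nhds
  simpa [hy] using hlim

end PositivelyHomogeneous

theorem continuous_posHomogeneous_finite_or_bot_general {Y : Type*} [AddCommGroup Y] [Module ℝ Y]
    [TopologicalSpace Y] [ContinuousSMul ℝ Y]
    (f : Y → EReal) (hf : Continuous f)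
    (hne : {p : Y × ℝ | f p.1 ≤ (p.2 : EReal)}.Nonempty)
    (hcone : ∀ p ∈ {p : Y × ℝ | f p.1 ≤ (p.2 : EReal)}, ∀ l : ℝ, 0 ≤ l →
      l • p ∈ {p : Y × ℝ | f p.1 ≤ (p.2 : EReal)}) :
    (∀ y : Y, ∃ c : ℝ, f y = (c : EReal)) ∨ (∀ y : Y, f y = ⊥) := by
  have hne_top : ∀ y, f y ≠ ⊤ := fun y hy => by
    simpa [map_zero_eq_top_of_eq_top hf hcone hy] using map_zero_le_zero_of_epigraph_cone hne hcone
  by_cases h0 : f 0 = ⊥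
  · refine Or.inr fun y => ?_
    induction hy : f y using EReal.rec with
    | bot => rfl
    | coe a => simp [map_zero_eq_zero_of_eq_coe hf hcone hy] at h0
    | top => exact absurd hy (hne_top y)
  · exact Or.inl fun y =>
      ⟨(f y).toReal, (EReal.coe_toReal (hne_top y) (h0 ∘ map_zero_eq_bot_of_eq_bot hf hcone)).symm⟩

theorem continuous_posHomogeneous_finite_or_bot {Y : Type*} [AddCommGroup Y] [Module ℝ Y]
    [TopologicalSpace Y] [IsTopologicalAddGroup Y] [ContinuousSMul ℝ Y]
    (f : Y → EReal) (hf : Continuous f)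
    (hne : {p : Y × ℝ | f p.1 ≤ (p.2 : EReal)}.Nonempty)
    (hcone : ∀ p ∈ {p : Y × ℝ | f p.1 ≤ (p.2 : EReal)}, ∀ l : ℝ, 0 ≤ l →
      l • p ∈ {p : Y × ℝ | f p.1 ≤ (p.2 : EReal)}) :
    (∀ y : Y, ∃ c : ℝ, f y = (c : EReal)) ∨ (∀ y : Y, f y = ⊥) :=
  continuous_posHomogeneous_finite_or_bot_general f hf hne hcone
end
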